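/- Let p be a prime with p ≡ 7 (mod 8). The pure quadratic double circulant code P_p(u, 1+ω, ω+uω) over F₄+uF₄, i.e. the row span of the p×2p matrix [ I_p | Q_p(u, 1+ω, ω+uω) ], is a self-dual code of length 2p over F₄+uF₄. -/

import Mathlib

noncomputable section

open Matrix
open scoped Classical

/-- The quadratic residue circulant matrix `Q_p(a,b,c)`: the `p × p` circulant matrix
(indexed by `ZMod p`) whose `(i,j)` entry is `a` if `j - i = 0`, `b` if `j - i` is a
nonzero quadratic residue modulo `p`, and `c` if `j - i` is a quadratic non-residue. -/
def Qcirc {R : Type*} [CommRing R] (p : ℕ) (a b c : R) :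
    Matrix (ZMod p) (ZMod p) R :=
  Matrix.of fun i j =>
    if j - i = 0 then a else if IsSquare (j - i) then b else c

/-- The rows of the generator matrix `[ I_p | Q_p(a,b,c) ]` of the pure quadratic
double circulant code, as vectors of length `2p` indexed by `ZMod p ⊕ ZMod p`. -/
def pureQDCGen {R : Type*} [CommRing R] (p : ℕ) (a b c : R) :
    ZMod p → (ZMod p ⊕ ZMod p) → R := fun i =>
  Sum.elim (fun j => if i = j then 1 else 0) (fun j => Qcirc p a b c i j)

/-- The pure quadratic double circulant code `P_p(a,b,c)`: the row span of
`[ I_p | Q_p(a,b,c) ]`, a linear code of length `2p` over `R`. -/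
def pureQDC {R : Type*} [CommRing R] (p : ℕ) (a b c : R) :
    Submodule R ((ZMod p ⊕ ZMod p) → R) :=
  Submodule.span R (Set.range (pureQDCGen p a b c))

/-- The dual of a code `C ⊆ Rⁿ` with respect to the Euclidean inner product. -/
def dualSet {R ι : Type*} [CommRing R] [Fintype ι] (C : Set (ι → R)) : Set (ι → R) :=
  {x | ∀ y ∈ C, ∑ i, x i * y i = 0}

/-- The field `F₄` with four elements. -/
abbrev F4 := GaloisField 2 2

/-- The ring `F₄ + u F₄ = F₄[u]/(u²)`. -/
abbrev R4 := DualNumber F4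

/-!
Since `p ≡ 3 (mod 4)`, `-1` is a non-residue, so `Q_p(a,b,c) = aI + bS + cSᵀ` where
`S = Q_p(0,1,0)` is the (circulant) incidence matrix of the nonzero squares. The nonzero squares
form a `(p, (p-1)/2, (p-3)/4)` difference set (a Jacobi-sum computation), which gives
`SSᵀ = SᵀS` explicitly; together with `S + Sᵀ = J - I` this determines `QQᵀ = Q_p(d, x, x)`. For
`p ≡ 7 (mod 8)` both `(p-1)/2` and `(p-3)/4` are odd, and in `F₄ + uF₄` (characteristic 2,
`u² = 0`, `ω² = ω + 1`) the parameters `(u, 1 + ω, ω + uω)` give `d = 1` and `x = 0`. Thus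
`QQᵀ = I = -I`, and a code generated by `[I | A]` with `AAᵀ = -I` is self-dual.
-/

section SelfDual

open Submodule Set

variable {R ι m n : Type*} [CommRing R] [Fintype m]

theorem mem_span_range_row_iff_exists_vecMul (M : Matrix m ι R) (x : ι → R) :
    x ∈ span R (range M.row) ↔ ∃ c, c ᵥ* M = x := by
  rw [← range_vecMulLinear, LinearMap.mem_range]
  rfl

theorem mem_dualSet_span_range_row_iff [Fintype ι] (M : Matrix m ι R) (x : ι → R) :
    x ∈ dualSet (span R (range M.row) : Set (ι → R)) ↔ M *ᵥ x = 0 := by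
  simp only [dualSet, Set.mem_ofPred_eq, SetLike.mem_coe, mem_span_range_row_iff_exists_vecMul,
    forall_exists_index, forall_apply_eq_imp_iff]
  rw [← dotProduct_eq_zero_iff]
  refine forall_congr' fun c => ?_
  change x ⬝ᵥ (c ᵥ* M) = 0 ↔ _
  rw [dotProduct_comm, ← dotProduct_mulVec, dotProduct_comm]

variable [Fintype n] [DecidableEq n]

theorem mem_span_range_row_fromCols_one_iff (A : Matrix n n R) (x : n ⊕ n → R) :
    x ∈ span R (range (fromCols (1 : Matrix n n R) A).row) ↔
      (x ∘ Sum.inl) ᵥ* A = x ∘ Sum.inr := by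
  rw [mem_span_range_row_iff_exists_vecMul]
  constructor
  · rintro ⟨c, rfl⟩
    simp
  · intro h
    refine ⟨x ∘ Sum.inl, ?_⟩
    ext (i | i) <;> simp [h]

theorem span_range_row_fromCols_one_eq_dualSet (A : Matrix n n R) (hA : A * Aᵀ = -1) :
    (span R (range (fromCols (1 : Matrix n n R) A).row) : Set (n ⊕ n → R)) =
      dualSet (span R (range (fromCols (1 : Matrix n n R) A).row) : Set (n ⊕ n → R)) := by
  have hA' : Aᵀ * A = -1 := by
    rw [← neg_eq_iff_eq_neg, ← neg_mul]
    exact mul_eq_one_comm.mp (by rw [mul_neg, hA, neg_neg])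
  ext x
  rw [SetLike.mem_coe, mem_span_range_row_fromCols_one_iff, mem_dualSet_span_range_row_iff,
    fromCols_mulVec, one_mulVec, ← mulVec_transpose]
  constructor
  · intro h
    rw [← h, mulVec_mulVec, hA, neg_mulVec, one_mulVec, add_neg_cancel]
  · intro h
    rw [eq_neg_of_add_eq_zero_left h, mulVec_neg, mulVec_mulVec, hA', neg_mulVec, one_mulVec,
      neg_neg]

end SelfDual

section QuadraticChar

open Finset

variable {F : Type*} [Field F] [Fintype F]

theorem ringChar_ne_two_of_card_mod_four_eq_three (hF : Fintype.card F % 4 = 3) :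
    ringChar F ≠ 2 := by
  rw [Ne, FiniteField.even_card_iff_char_two]
  omega

variable [DecidableEq F]

theorem quadraticChar_neg_of_card_mod_four_eq_three (hF : Fintype.card F % 4 = 3) (x : F) :
    quadraticChar F (-x) = -quadraticChar F x := by
  have h : quadraticChar F (-1) = -1 := by
    rw [quadraticChar_neg_one_iff_not_isSquare, FiniteField.isSquare_neg_one_iff, not_not, hF]
  rw [neg_eq_neg_one_mul x, map_mul, h, neg_one_mul]

theorem sum_quadraticChar_add (hF : ringChar F ≠ 2) (e : F) :
    ∑ t, quadraticChar F (t + e) = 0 :=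
  (Equiv.sum_comp (Equiv.addRight e) (quadraticChar F ·)).trans (quadraticChar_sum_zero hF)

theorem sum_quadraticChar_mul_quadraticChar_add (hF : ringChar F ≠ 2) {e : F} (he : e ≠ 0) :
    ∑ t, quadraticChar F t * quadraticChar F (t + e) = -1 := by
  have hsq : ∀ x : F, x ≠ 0 → quadraticChar F x * quadraticChar F x = 1 := fun x hx => by
    rw [← sq]; exact quadraticChar_sq_one hx
  have hJ : jacobiSum (quadraticChar F) (quadraticChar F) = -quadraticChar F (-1) := by
    have := jacobiSum_nontrivial_inv (quadraticChar_ne_one hF)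
    rwa [(quadraticChar_isQuadratic F).inv] at this
  -- substituting `t = -e x` turns the sum into `χ(-1) J(χ, χ)`
  calc ∑ t, quadraticChar F t * quadraticChar F (t + e)
      = ∑ x, quadraticChar F (-e * x) * quadraticChar F (-e * x + e) :=
        (Fintype.sum_equiv (Equiv.mulLeft₀ (-e) (neg_ne_zero.mpr he)) _ _ fun _ => rfl).symm
    _ = ∑ x, quadraticChar F (-1) * (quadraticChar F e * quadraticChar F e) *
          (quadraticChar F x * quadraticChar F (1 - x)) := by
        refine sum_congr rfl fun x _ => ?_
        rw [show -e * x + e = e * (1 - x) by ring, show -e * x = -1 * e * x by ring]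
        simp only [map_mul]
        ring
    _ = quadraticChar F (-1) * jacobiSum (quadraticChar F) (quadraticChar F) := by
        rw [hsq e he, mul_one, jacobiSum, mul_sum]
    _ = -1 := by rw [hJ, mul_neg, hsq _ (neg_ne_zero.mpr one_ne_zero)]

theorem two_mul_card_quadraticChar_eq_one_add_one (hF : ringChar F ≠ 2) :
    2 * #{t | quadraticChar F t = 1} + 1 = Fintype.card F := by
  have hpt : ∀ t : F, 2 * (if quadraticChar F t = 1 then 1 else 0 : ℤ) =
      1 + quadraticChar F t - if t = 0 then 1 else 0 := by
    intro t
    rcases eq_or_ne t 0 with rfl | ht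
    · simp only [quadraticChar_zero]; norm_num
    · rcases quadraticChar_dichotomy ht with h | h <;> simp only [h, ht] <;> norm_num
  have : (2 * #{t | quadraticChar F t = 1} + 1 : ℤ) = Fintype.card F := by
    rw [← sum_boole, mul_sum, sum_congr rfl fun t _ => hpt t, sum_sub_distrib, sum_add_distrib,
      quadraticChar_sum_zero hF, sum_ite_eq' univ (0 : F)]
    simp
  exact_mod_cast this

theorem four_mul_card_quadraticChar_eq_one_and_add_add_three
    (hF : Fintype.card F % 4 = 3) {e : F} (he : e ≠ 0) :
    4 * #{t | quadraticChar F t = 1 ∧ quadraticChar F (t + e) = 1} + 3 = Fintype.card F := by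
  have hF2 := ringChar_ne_two_of_card_mod_four_eq_three hF
  have hpt : ∀ t : F,
      4 * (if quadraticChar F t = 1 ∧ quadraticChar F (t + e) = 1 then 1 else 0 : ℤ) =
        (1 + quadraticChar F t) * (1 + quadraticChar F (t + e)) -
          (if t = 0 then 1 + quadraticChar F e else 0) -
          (if t = -e then 1 + quadraticChar F (-e) else 0) := by
    intro t
    rcases eq_or_ne t 0 with rfl | ht
    · simp only [quadraticChar_zero, zero_add, he, zero_eq_neg]; norm_num
    rcases eq_or_ne t (-e) with rfl | hte
    · simp only [quadraticChar_zero, neg_add_cancel, ht]; norm_num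
    have hte' : t + e ≠ 0 := fun h => hte (eq_neg_of_add_eq_zero_left h)
    rcases quadraticChar_dichotomy ht with h | h <;>
      rcases quadraticChar_dichotomy hte' with h' | h' <;> simp only [h, h', ht, hte] <;> norm_num
  have : (4 * #{t | quadraticChar F t = 1 ∧ quadraticChar F (t + e) = 1} + 3 : ℤ) =
      Fintype.card F := by
    rw [← sum_boole, mul_sum, sum_congr rfl fun t _ => hpt t]
    simp only [sum_sub_distrib, add_mul, mul_add, one_mul, mul_one, sum_add_distrib, sum_ite_eq',
      mem_univ, if_true, sum_const, card_univ, nsmul_eq_mul, quadraticChar_sum_zero hF2,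
      sum_quadraticChar_add hF2 e, sum_quadraticChar_mul_quadraticChar_add hF2 he,
      quadraticChar_neg_of_card_mod_four_eq_three hF]
    ring
  exact_mod_cast this

end QuadraticChar

section NormalMatrix

variable {R n : Type*} [CommRing R] [Fintype n] [DecidableEq n]

theorem smul_one_add_mul_transpose {S : Matrix n n R} (hS : Sᵀ * S = S * Sᵀ) (a b c : R) :
    (a • 1 + b • S + c • Sᵀ) * (a • 1 + b • S + c • Sᵀ)ᵀ =
      a ^ 2 • 1 + (a * (b + c)) • (S + Sᵀ) + (b ^ 2 + c ^ 2 - 2 * b * c) • (S * Sᵀ) +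
        (b * c) • ((S + Sᵀ) * (S + Sᵀ)) := by
  simp only [transpose_add, transpose_smul, transpose_one, transpose_transpose, add_mul, mul_add,
    Matrix.smul_mul, Matrix.mul_smul, Matrix.one_mul, Matrix.mul_one, smul_smul, hS]
  module

end NormalMatrix

section Qcirc

open Finset

variable {R : Type*} [CommRing R] {p : ℕ}

theorem Qcirc_eq_circulant (a b c : R) :
    Qcirc p a b c = circulant fun t => if -t = 0 then a else if IsSquare (-t) then b else c := by
  ext i j
  simp only [Qcirc, of_apply, circulant_apply, neg_sub]

theorem Qcirc_transpose_mul_comm [NeZero p] (a b c : R) :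
    (Qcirc p a b c)ᵀ * Qcirc p a b c = Qcirc p a b c * (Qcirc p a b c)ᵀ := by
  rw [Qcirc_eq_circulant, transpose_circulant, circulant_mul_comm]

theorem Qcirc_zero_zero [NeZero p] (a : R) : Qcirc p a 0 0 = a • 1 := by
  ext i j
  simp only [Qcirc, of_apply, ite_self, Matrix.smul_apply, one_apply, sub_eq_zero,
    eq_comm (a := j), smul_eq_mul, mul_ite, mul_one, mul_zero]

theorem Qcirc_zero_one_one_mul_self [NeZero p] :
    Qcirc p (0 : R) 1 1 * Qcirc p 0 1 1 = Qcirc p ((p : R) - 1) ((p : R) - 2) ((p : R) - 2) := by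
  ext i k
  have hrow : ∀ i j : ZMod p, Qcirc p (0 : R) 1 1 i j = 1 - if i = j then 1 else 0 := by
    intro i j
    simp only [Qcirc, of_apply, ite_self, sub_eq_zero, eq_comm (a := j)]
    split_ifs <;> simp
  simp only [mul_apply, hrow, sub_mul, mul_sub, one_mul, mul_one, sum_sub_distrib, ite_mul,
    zero_mul, sum_ite_eq, sum_ite_eq', mem_univ, if_true, sum_const, card_univ, ZMod.card,
    nsmul_eq_mul]
  simp only [Qcirc, of_apply, ite_self, sub_eq_zero, eq_comm (a := k)]
  split_ifs <;> ring

variable [Fact p.Prime]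

theorem Qcirc_zero_one_zero_apply (i j : ZMod p) :
    Qcirc p (0 : R) 1 0 i j = if quadraticChar (ZMod p) (j - i) = 1 then 1 else 0 := by
  rcases eq_or_ne (j - i) 0 with h | h
  · simp [Qcirc, h]
  · simp only [Qcirc, of_apply, h, if_false, quadraticChar_one_iff_isSquare h]
    congr 1

theorem Qcirc_eq_smul_one_add (hp : p % 4 = 3) (a b c : R) :
    Qcirc p a b c = a • 1 + b • Qcirc p 0 1 0 + c • (Qcirc p 0 1 0)ᵀ := by
  have hF : Fintype.card (ZMod p) % 4 = 3 := by rwa [ZMod.card]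
  ext i j
  simp only [Matrix.add_apply, Matrix.smul_apply, one_apply, transpose_apply,
    Qcirc_zero_one_zero_apply, smul_eq_mul, ← neg_sub j i,
    quadraticChar_neg_of_card_mod_four_eq_three hF]
  rcases eq_or_ne (j - i) 0 with h | h
  · simp [Qcirc, (sub_eq_zero.mp h).symm]
  · have hij : i ≠ j := fun hij => h (by rw [hij, sub_self])
    rcases quadraticChar_dichotomy h with hχ | hχ
    · simp [Qcirc, h, hij, hχ, (quadraticChar_one_iff_isSquare h).mp hχ]
    · simp [Qcirc, h, hij, hχ, quadraticChar_neg_one_iff_not_isSquare.mp hχ]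

theorem Qcirc_zero_one_zero_mul_transpose (hp : p % 4 = 3) :
    Qcirc p (0 : R) 1 0 * (Qcirc p 0 1 0)ᵀ =
      Qcirc p (((p - 1) / 2 : ℕ) : R) ((p - 3) / 4 : ℕ) ((p - 3) / 4 : ℕ) := by
  have hF : Fintype.card (ZMod p) % 4 = 3 := by rwa [ZMod.card]
  ext i k
  have hcount : (Qcirc p (0 : R) 1 0 * (Qcirc p 0 1 0)ᵀ : Matrix (ZMod p) (ZMod p) R) i k =
      #{t | quadraticChar (ZMod p) t = 1 ∧ quadraticChar (ZMod p) (t + (i - k)) = 1} := by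
    rw [mul_apply, ← sum_boole]
    refine (Fintype.sum_equiv (Equiv.addRight i) _ _ fun t => ?_).symm
    simp only [transpose_apply, Qcirc_zero_one_zero_apply, Equiv.coe_addRight,
      add_sub_cancel_right, ← ite_and, boole_mul, add_sub_assoc']
  rw [hcount]
  rcases eq_or_ne (i - k) 0 with h | h
  · have := two_mul_card_quadraticChar_eq_one_add_one (ringChar_ne_two_of_card_mod_four_eq_three hF)
    rw [ZMod.card] at this
    simp only [h, add_zero, and_self]
    simp only [Qcirc, of_apply, sub_eq_zero.mp h, sub_self, if_true]
    congr 1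
    omega
  · have := four_mul_card_quadraticChar_eq_one_and_add_add_three hF h
    rw [ZMod.card] at this
    simp only [Qcirc, of_apply, ite_self, sub_eq_zero, (sub_ne_zero.mp h).symm, if_false]
    congr 1
    omega

theorem Qcirc_mul_transpose (hp : p % 4 = 3) (a b c : R) :
    Qcirc p a b c * (Qcirc p a b c)ᵀ =
      Qcirc p (a ^ 2 + ((p - 1) / 2 : ℕ) * (b ^ 2 + c ^ 2))
        (a * (b + c) + ((p - 3) / 4 : ℕ) * (b ^ 2 + c ^ 2) + ((p - 1) / 2 : ℕ) * b * c)
        (a * (b + c) + ((p - 3) / 4 : ℕ) * (b ^ 2 + c ^ 2) + ((p - 1) / 2 : ℕ) * b * c) := by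
  have hT : Qcirc p (0 : R) 1 0 + (Qcirc p 0 1 0)ᵀ = Qcirc p 0 1 1 := by
    simpa using (Qcirc_eq_smul_one_add hp (0 : R) 1 1).symm
  have hm : (p : R) = 2 * ((p - 1) / 2 : ℕ) + 1 := by
    exact_mod_cast congrArg (Nat.cast : ℕ → R) (by omega : p = 2 * ((p - 1) / 2) + 1)
  have hml : (((p - 1) / 2 : ℕ) : R) = 2 * ((p - 3) / 4 : ℕ) + 1 := by
    exact_mod_cast congrArg (Nat.cast : ℕ → R) (by omega : (p - 1) / 2 = 2 * ((p - 3) / 4) + 1)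
  rw [Qcirc_eq_smul_one_add hp a b c, smul_one_add_mul_transpose (Qcirc_transpose_mul_comm 0 1 0),
    hT, Qcirc_zero_one_one_mul_self, Qcirc_zero_one_zero_mul_transpose hp, ← Qcirc_zero_zero]
  ext i j
  simp only [Qcirc, of_apply, Matrix.add_apply, Matrix.smul_apply, smul_eq_mul]
  split_ifs
  · linear_combination (b * c) * hm
  all_goals linear_combination (b * c) * hm + (b * c) * hml

end Qcirc

section R4

open DualNumber

instance R4.charP : CharP R4 2 :=
  charP_of_injective_algebraMap (R := F4) TrivSqZeroExt.inl_injective 2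

theorem R4.natCast_eq_one_of_mod_two_eq_one {n : ℕ} (hn : n % 2 = 1) : (n : R4) = 1 := by
  rw [CharP.cast_eq_mod R4 2, hn, Nat.cast_one]

theorem Qcirc_eps_mul_transpose_eq_neg_one {p : ℕ} [Fact p.Prime] (h7 : p % 8 = 7) {ω : R4}
    (hω : ω ^ 2 + ω + 1 = 0) :
    Qcirc p ε (1 + ω) (ω + ε * ω) * (Qcirc p ε (1 + ω) (ω + ε * ω))ᵀ = -1 := by
  have h2 : (2 : R4) = 0 := CharTwo.two_eq_zero
  have hε : (ε * ε : R4) = 0 := eps_mul_eps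
  rw [Qcirc_mul_transpose (by omega),
    R4.natCast_eq_one_of_mod_two_eq_one (by omega : (p - 1) / 2 % 2 = 1),
    R4.natCast_eq_one_of_mod_two_eq_one (by omega : (p - 3) / 4 % 2 = 1), ← neg_one_smul R4 1,
    ← Qcirc_zero_zero]
  congr 1
  · linear_combination (1 + ω + ω ^ 2 + ε * ω ^ 2) * h2 + (1 + ω ^ 2) * hε
  all_goals linear_combination (1 + ε) * hω + (ω + ω ^ 2) * hε +
      (ε * ω + ω + ω ^ 2 + ε * ω ^ 2) * h2

end R4

/-- For a prime `p ≡ 7 (mod 8)` and `ω` a root of `x² + x + 1` in `F₄ + u F₄`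
(necessarily `ω ∈ F₄`), the pure quadratic double circulant code
`P_p(u, 1 + ω, ω + uω)` over `F₄ + u F₄` is self-dual of length `2p`. -/
theorem pureQDC_self_dual_of_mod_eight_eq_seven
    (p : ℕ) [NeZero p] (hp : Nat.Prime p) (h7 : p % 8 = 7)
    (ω : R4) (hω : ω ^ 2 + ω + 1 = 0) :
    (pureQDC p (DualNumber.eps : R4) (1 + ω) (ω + DualNumber.eps * ω) :
        Set ((ZMod p ⊕ ZMod p) → R4)) =
      dualSet (pureQDC p (DualNumber.eps : R4) (1 + ω) (ω + DualNumber.eps * ω) :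
        Set ((ZMod p ⊕ ZMod p) → R4)) := by
  have : Fact p.Prime := ⟨hp⟩
  exact span_range_row_fromCols_one_eq_dualSet _ (Qcirc_eps_mul_transpose_eq_neg_one h7 hω)

end
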